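/- arXiv:1007.4655 — 4 statements merged into one kernel-verified Lean document; each statement's English description precedes it below -/
import Mathlib

section
/- Let A be a unital C*-algebra, I a closed two-sided ideal of A, and let a_1, …, a_n be pairwise commuting elements of A such that r(a_j) < 1 and ‖π(a_j)‖ ≤ 1 for all j. Then there exists e ∈ I such that 1 + e is invertible in A and ‖(1+e) a_j (1+e)⁻¹‖ ≤ 1 for all j = 1, …, n. -/
/-!
Put `x = ∑ⱼ (aⱼ⋆aⱼ - 1)⁺`: it is positive, `aⱼ⋆aⱼ ≤ 1 + x`, and `x ∈ I` because
`‖π(aⱼ)‖ ≤ 1` means `π(aⱼ⋆aⱼ - 1) ≤ 0`. For `r(a) < 1` the Stein sum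
`Φₐ(y) = ∑ₖ (aᵏ)⋆ y aᵏ` converges, is positive, maps `I` into itself and solves
`a⋆ Φₐ(y) a = Φₐ(y) - y`. As the `aⱼ` commute, `Φ_{aᵢ}` commutes with conjugation by `aⱼ`, so
applying `Φ_{a₁}, …, Φ_{aₙ}` in turn to `x` keeps the inequalities already obtained and gives
`H ≥ x` in `I` with `aⱼ⋆ H aⱼ + x ≤ H` for every `j`. Then `T = 1 + H` satisfies
`aⱼ⋆ T aⱼ ≤ T`, which says exactly that `T^{1/2} aⱼ T^{-1/2}` is a contraction, and
`T^{1/2} ∈ 1 + I`.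
-/

open scoped NNReal CStarAlgebra
open Filter CFC

theorem eventually_norm_pow_le_of_spectralRadius_lt {A : Type*} [NormedRing A]
    [NormedAlgebra ℂ A] [CompleteSpace A] {a : A} {t : ℝ≥0} (ht : spectralRadius ℂ a < t) :
    ∀ᶠ k in atTop, ‖a ^ k‖ ≤ t ^ k := by
  have hgelfand := spectrum.pow_nnnorm_pow_one_div_tendsto_nhds_spectralRadius a
  filter_upwards [hgelfand.eventually_lt_const ht, eventually_ne_atTop 0] with k hk hk0
  rw [one_div] at hk
  have := pow_le_pow_left' hk.le k
  rw [ENNReal.rpow_inv_natCast_pow hk0] at this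
  exact_mod_cast this

theorem summable_star_pow_mul_mul_pow {A : Type*} [NormedRing A] [StarRing A] [NormedStarGroup A]
    [NormedAlgebra ℂ A] [CompleteSpace A] {a : A} (ha : spectralRadius ℂ a < 1) (x : A) :
    Summable fun k : ℕ => star (a ^ k) * x * a ^ k := by
  obtain ⟨t, hat, ht1⟩ := ENNReal.lt_iff_exists_nnreal_btwn.mp ha
  have ht1 : (t : ℝ) ^ 2 < 1 := pow_lt_one₀ t.2 (by exact_mod_cast ht1) two_ne_zero
  refine .of_norm_bounded_eventually_nat
    ((summable_geometric_of_lt_one (by positivity) ht1).mul_left ‖x‖) ?_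
  filter_upwards [eventually_norm_pow_le_of_spectralRadius_lt hat] with k hk
  calc ‖star (a ^ k) * x * a ^ k‖ ≤ ‖a ^ k‖ * ‖x‖ * ‖a ^ k‖ := by
        simpa only [norm_star] using norm_mul₃_le (a := star (a ^ k))
    _ ≤ t ^ k * ‖x‖ * t ^ k := by gcongr
    _ = ‖x‖ * ((t : ℝ) ^ 2) ^ k := by ring

noncomputable def steinSum {A : Type*} [Ring A] [StarRing A] [TopologicalSpace A] (a x : A) : A :=
  ∑' k : ℕ, star (a ^ k) * x * a ^ k

section Stein

variable {A : Type*} [CStarAlgebra A] {a : A}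

theorem steinSum_sub (ha : spectralRadius ℂ a < 1) (x y : A) :
    steinSum a (x - y) = steinSum a x - steinSum a y := by
  simp only [steinSum, mul_sub, sub_mul]
  exact (summable_star_pow_mul_mul_pow ha x).tsum_sub (summable_star_pow_mul_mul_pow ha y)

theorem star_mul_steinSum_mul (ha : spectralRadius ℂ a < 1) (x : A) :
    star a * steinSum a x * a = steinSum a x - x := by
  have hs := summable_star_pow_mul_mul_pow ha x
  rw [eq_sub_iff_add_eq, steinSum, ← hs.tsum_mul_left, ← (hs.mul_left _).tsum_mul_right,
    hs.tsum_eq_zero_add]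
  simp only [pow_zero, star_one, one_mul, mul_one, add_comm x]
  congr 1
  refine tsum_congr fun k => ?_
  rw [pow_succ, star_mul]
  simp only [mul_assoc]

theorem star_mul_steinSum_mul_of_commute {b : A} (ha : spectralRadius ℂ a < 1)
    (hab : Commute a b) (x : A) :
    star b * steinSum a x * b = steinSum a (star b * x * b) := by
  have hs := summable_star_pow_mul_mul_pow ha x
  rw [steinSum, ← hs.tsum_mul_left, ← (hs.mul_left _).tsum_mul_right, steinSum]
  refine tsum_congr fun k => ?_
  have hk : a ^ k * b = b * a ^ k := (hab.pow_left k).eq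
  have hk' : star b * star (a ^ k) = star (a ^ k) * star b := by
    rw [← star_mul, ← star_mul, hk]
  rw [mul_assoc _ _ b, mul_assoc _ _ b, hk, ← mul_assoc (star b), ← mul_assoc (star b), hk']
  simp only [mul_assoc]

theorem map_steinSum {B : Type*} [CStarAlgebra B] (π : A →⋆ₐ[ℂ] B)
    (ha : spectralRadius ℂ a < 1) (x : A) : π (steinSum a x) = steinSum (π a) (π x) := by
  rw [steinSum, (summable_star_pow_mul_mul_pow ha x).map_tsum π (map_continuous π)]
  simp [steinSum, map_star]

variable [PartialOrder A] [StarOrderedRing A]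

theorem steinSum_nonneg {x : A} (hx : 0 ≤ x) : 0 ≤ steinSum a x :=
  tsum_nonneg fun _ => star_left_conjugate_nonneg hx _

theorem steinSum_mono (ha : spectralRadius ℂ a < 1) {x y : A} (hxy : x ≤ y) :
    steinSum a x ≤ steinSum a y := by
  rw [← sub_nonneg, ← steinSum_sub ha]
  exact steinSum_nonneg (sub_nonneg.mpr hxy)

theorem le_steinSum (ha : spectralRadius ℂ a < 1) {x : A} (hx : 0 ≤ x) : x ≤ steinSum a x := by
  rw [← sub_nonneg, ← star_mul_steinSum_mul ha]
  exact star_left_conjugate_nonneg (steinSum_nonneg hx) a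

end Stein

section Majorant

variable {A B : Type*} [CStarAlgebra A] [PartialOrder A] [StarOrderedRing A] [CStarAlgebra B]

theorem exists_mem_ker_forall_star_mul_mul_add_le {ι : Type*} (π : A →⋆ₐ[ℂ] B) (a : ι → A)
    (hcomm : ∀ i j, Commute (a i) (a j)) (hr : ∀ i, spectralRadius ℂ (a i) < 1)
    {x : A} (hx : 0 ≤ x) (hπx : π x = 0) (s : Finset ι) :
    ∃ H : A, π H = 0 ∧ x ≤ H ∧ ∀ j ∈ s, star (a j) * H * a j + x ≤ H := by
  classical
  induction s using Finset.induction_on with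
  | empty => exact ⟨x, hπx, le_rfl, by simp⟩
  | @insert i s _ ih =>
    obtain ⟨H, hπH, hxH, hH⟩ := ih
    have hH0 : 0 ≤ H := hx.trans hxH
    refine ⟨steinSum (a i) H, by rw [map_steinSum π (hr i), hπH]; simp [steinSum],
      hxH.trans (le_steinSum (hr i) hH0), ?_⟩
    rintro j hj
    rcases Finset.mem_insert.mp hj with rfl | hjs
    · calc star (a j) * steinSum (a j) H * a j + x = steinSum (a j) H - (H - x) := by
            rw [star_mul_steinSum_mul (hr j)]; abel
        _ ≤ steinSum (a j) H := sub_le_self _ (sub_nonneg.mpr hxH)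
    · have hstep : star (a j) * H * a j ≤ H - x := le_sub_iff_add_le.mpr (hH j hjs)
      calc star (a j) * steinSum (a i) H * a j + x
          = steinSum (a i) (star (a j) * H * a j) + x := by
            rw [star_mul_steinSum_mul_of_commute (hr i) (hcomm i j)]
        _ ≤ steinSum (a i) (H - x) + x := by gcongr; exact steinSum_mono (hr i) hstep
        _ = steinSum (a i) H - (steinSum (a i) x - x) := by rw [steinSum_sub (hr i)]; abel
        _ ≤ steinSum (a i) H := sub_le_self _ (sub_nonneg.mpr (le_steinSum (hr i) hx))

end Majorant

section Contraction

variable {A : Type*} [CStarAlgebra A]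

theorem map_posPart {B : Type*} [CStarAlgebra B] (π : A →⋆ₐ[ℂ] B) {y : A}
    (hy : IsSelfAdjoint y) : π y⁺ = (π y)⁺ :=
  NonUnitalStarAlgHomClass.map_cfcₙ π _ y

variable [PartialOrder A] [StarOrderedRing A]

theorem posPart_star_mul_self_sub_one_eq_zero {b : A} (hb : ‖b‖ ≤ 1) : (star b * b - 1)⁺ = 0 := by
  rw [posPart_eq_zero_iff _ ((IsSelfAdjoint.star_mul_self b).sub (.one A)), sub_nonpos,
    ← CStarAlgebra.norm_le_one_iff_of_nonneg _ (star_mul_self_nonneg b),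
    CStarRing.norm_star_mul_self]
  exact mul_le_one₀ hb (norm_nonneg b) hb

theorem norm_mul_mul_inv_le_one_of_star_mul_mul_le {s : Aˣ} (hs : IsSelfAdjoint (s : A))
    {a : A} (h : star a * (s * s) * a ≤ s * s) : ‖(s : A) * a * ↑s⁻¹‖ ≤ 1 := by
  have hs' : star (↑s⁻¹ : A) = ↑s⁻¹ := by
    rw [← Units.coe_star_inv, show star s = s from Units.ext hs]
  have hle : star ((s : A) * a * ↑s⁻¹) * ((s : A) * a * ↑s⁻¹) ≤ 1 := by
    calc star ((s : A) * a * ↑s⁻¹) * ((s : A) * a * ↑s⁻¹)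
        = star (↑s⁻¹ : A) * (star a * (s * s) * a) * ↑s⁻¹ := by
          simp only [star_mul, hs.star_eq, hs', mul_assoc]
      _ ≤ star (↑s⁻¹ : A) * (s * s) * ↑s⁻¹ := star_left_conjugate_le_conjugate h _
      _ = 1 := by simp [hs']
  rw [← CStarAlgebra.norm_le_one_iff_of_nonneg _ (star_mul_self_nonneg _),
    CStarRing.norm_star_mul_self, ← sq, sq_le_one_iff₀ (norm_nonneg _)] at hle
  exact hle

theorem exists_unit_sub_one_mem_ker_forall_norm_conj_le_one {B ι : Type*} [CStarAlgebra B]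
    [PartialOrder B] [StarOrderedRing B] (π : A →⋆ₐ[ℂ] B) (a : ι → A) {H : A} (hH : 0 ≤ H)
    (hπH : π H = 0) (h : ∀ j, star (a j) * (1 + H) * a j ≤ 1 + H) :
    ∃ e : A, π e = 0 ∧ ∃ u : Aˣ, (u : A) = 1 + e ∧ ∀ j, ‖(u : A) * a j * ↑u⁻¹‖ ≤ 1 := by
  have hT : IsStrictlyPositive (1 + H) := isStrictlyPositive_one.add_nonneg hH
  have hSS : sqrt (1 + H) * sqrt (1 + H) = 1 + H := sqrt_mul_sqrt_self _ hT.nonneg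
  have hπS : π (sqrt (1 + H)) = 1 := by
    rw [← sqrt_mul_self _ (map_nonneg π (sqrt_nonneg _)), ← map_mul, hSS, map_add, map_one,
      hπH, add_zero, sqrt_one]
  refine ⟨sqrt (1 + H) - 1, by rw [map_sub, hπS, map_one, sub_self], hT.isUnit_cfcSqrt.unit,
    (add_sub_cancel _ _).symm, fun j => ?_⟩
  refine norm_mul_mul_inv_le_one_of_star_mul_mul_le (.of_nonneg (sqrt_nonneg _)) ?_
  simpa only [IsUnit.unit_spec, hSS] using h j

end Contraction

theorem stmt_0_general
    {A : Type*} [NormedRing A] [StarRing A] [CStarRing A] [CompleteSpace A]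
    [NormedAlgebra ℂ A] [StarModule ℂ A]
    {B : Type*} [NormedRing B] [StarRing B] [CStarRing B] [CompleteSpace B]
    [NormedAlgebra ℂ B] [StarModule ℂ B]
    (π : A →⋆ₐ[ℂ] B)
    (n : ℕ) (a : Fin n → A)
    (hcomm : ∀ i j, Commute (a i) (a j))
    (hr : ∀ j, spectralRadius ℂ (a j) < 1)
    (hq : ∀ j, ‖π (a j)‖ ≤ 1) :
    ∃ e : A, π e = 0 ∧ ∃ u : Aˣ, (u : A) = 1 + e ∧
      ∀ j, ‖(u : A) * a j * ((u⁻¹ : Aˣ) : A)‖ ≤ 1 := by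
  let : CStarAlgebra A := {}
  let : CStarAlgebra B := {}
  let := CStarAlgebra.spectralOrder A
  let := CStarAlgebra.spectralOrderedRing A
  let := CStarAlgebra.spectralOrder B
  let := CStarAlgebra.spectralOrderedRing B
  have hsa : ∀ j, IsSelfAdjoint (star (a j) * a j - 1) := fun j =>
    (IsSelfAdjoint.star_mul_self _).sub (.one A)
  set x := ∑ j, (star (a j) * a j - 1)⁺
  have hx : 0 ≤ x := Finset.sum_nonneg fun j _ => posPart_nonneg _
  have hπx : π x = 0 := (map_sum π _ _).trans <| Finset.sum_eq_zero fun j _ => by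
    simpa [map_posPart π (hsa j), map_star] using posPart_star_mul_self_sub_one_eq_zero (hq j)
  obtain ⟨H, hπH, hxH, hH⟩ :=
    exists_mem_ker_forall_star_mul_mul_add_le π a hcomm hr hx hπx Finset.univ
  refine exists_unit_sub_one_mem_ker_forall_norm_conj_le_one π a (hx.trans hxH) hπH fun j => ?_
  have hax : star (a j) * a j ≤ 1 + x := sub_le_iff_le_add'.mp <| (le_posPart (hsa j)).trans <|
    Finset.single_le_sum (f := fun i => (star (a i) * a i - 1)⁺) (fun i _ => posPart_nonneg _)
      (Finset.mem_univ j)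
  calc star (a j) * (1 + H) * a j = star (a j) * a j + star (a j) * H * a j := by
        rw [mul_add, add_mul, mul_one]
    _ ≤ 1 + x + (H - x) := add_le_add hax (le_sub_iff_add_le.mpr (hH j (Finset.mem_univ j)))
    _ = 1 + H := by abel

theorem stmt_0
    {A : Type*} [NormedRing A] [StarRing A] [CStarRing A] [CompleteSpace A]
    [NormedAlgebra ℂ A] [StarModule ℂ A]
    {B : Type*} [NormedRing B] [StarRing B] [CStarRing B] [CompleteSpace B]
    [NormedAlgebra ℂ B] [StarModule ℂ B]
    (π : A →⋆ₐ[ℂ] B) (hπ : Function.Surjective π)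
    (n : ℕ) (a : Fin n → A)
    (hcomm : ∀ i j, Commute (a i) (a j))
    (hr : ∀ j, spectralRadius ℂ (a j) < 1)
    (hq : ∀ j, ‖π (a j)‖ ≤ 1) :
    ∃ e : A, π e = 0 ∧ ∃ u : Aˣ, (u : A) = 1 + e ∧
      ∀ j, ‖(u : A) * a j * ((u⁻¹ : Aˣ) : A)‖ ≤ 1 :=
  stmt_0_general π n a hcomm hr hq
end

section
/- Let A be a unital C*-algebra, I a closed two-sided ideal of A, and let a_1, …, a_n be pairwise commuting elements of A. Then for every ε > 0 there exists e ∈ I such that 1 + e is invertible in A and, for every j = 1, …, n, max{r(a_j), ‖π(a_j)‖} ≤ ‖(1+e) a_j (1+e)⁻¹‖ ≤ max{r(a_j), ‖π(a_j)‖} + ε. -/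
/-!
Put `ρⱼ = max (r(aⱼ), ‖π aⱼ‖) + ε` and `cⱼ = aⱼ / ρⱼ`, so that `r(cⱼ) < 1` and `‖π cⱼ‖ ≤ 1`.
It suffices to find `g ≥ 1` with `π g = 1` and `cⱼ⋆ g cⱼ ≤ g` for all `j`: then `u = g^{1/2}`
lies in `1 + I` and `‖u cⱼ u⁻¹‖ ≤ 1`, while conjugation by `u` can lower the norm neither
below the spectral radius nor below the norm in the quotient.

Since `‖π cⱼ‖ ≤ 1`, the element `m = ∑ⱼ (cⱼ⋆ cⱼ - 1)⁺` lies in `I`. Since `r(cⱼ) < 1`, the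
Stein sums `Φⱼ x = ∑ₖ (cⱼ⋆)ᵏ x cⱼᵏ` converge; they are positive, preserve `I`, satisfy
`Φⱼ x = x + cⱼ⋆ (Φⱼ x) cⱼ`, and commute with conjugation by the other `cᵢ`. Hence
`z = Φ₁ ⋯ Φₙ m` satisfies `m + cⱼ⋆ z cⱼ ≤ z` for every `j`, and `g = 1 + z` works.
-/

open scoped ENNReal NNReal CStarAlgebra
open Filter

namespace spectrum

section Field

variable {𝕜 A : Type*} [NormedField 𝕜] [Ring A] [Algebra 𝕜 A]

lemma spectralRadius_smul {k : 𝕜} (hk : k ≠ 0) (a : A) :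
    spectralRadius 𝕜 (k • a) = ‖k‖₊ * spectralRadius 𝕜 a := by
  have hσ : spectrum 𝕜 (k • a) = (k • ·) '' spectrum 𝕜 a := unit_smul_eq_smul a (.mk0 k hk)
  simp only [spectralRadius, hσ, iSup_image, nnnorm_smul, ENNReal.coe_mul, ENNReal.mul_iSup]

lemma spectralRadius_units_conj (u : Aˣ) (a : A) :
    spectralRadius 𝕜 ((u : A) * a * ↑u⁻¹) = spectralRadius 𝕜 a := by
  simp only [spectralRadius, units_conjugate]

end Field

variable {A : Type*} [NormedRing A] [NormedAlgebra ℂ A] [CompleteSpace A]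

lemma eventually_nnnorm_pow_le {c : A} {t : ℝ≥0} (h : spectralRadius ℂ c < t) :
    ∀ᶠ m in atTop, ‖c ^ m‖₊ ≤ t ^ m := by
  filter_upwards [(pow_nnnorm_pow_one_div_tendsto_nhds_spectralRadius c).eventually_lt_const h,
    eventually_gt_atTop 0] with m hm hm0
  rw [one_div, ENNReal.rpow_inv_lt_iff (Nat.cast_pos.mpr hm0), ENNReal.rpow_natCast] at hm
  exact_mod_cast hm.le

lemma summable_norm_pow_sq_of_spectralRadius_lt_one {c : A} (hc : spectralRadius ℂ c < 1) :
    Summable fun m : ℕ => ‖c ^ m‖ ^ 2 := by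
  obtain ⟨t, hct, ht1⟩ := ENNReal.lt_iff_exists_nnreal_btwn.mp hc
  have ht : (t : ℝ) ^ 2 < 1 := pow_lt_one₀ t.coe_nonneg (mod_cast ht1) two_ne_zero
  refine .of_norm_bounded_eventually_nat (summable_geometric_of_lt_one (by positivity) ht) ?_
  filter_upwards [eventually_nnnorm_pow_le hct] with m hm
  rw [Real.norm_of_nonneg (by positivity), ← pow_mul, mul_comm, pow_mul]
  gcongr
  exact_mod_cast hm

end spectrum

namespace CStarAlgebra

variable {A B : Type*} [CStarAlgebra A] [CStarAlgebra B]

lemma spectralRadius_le_nnnorm (a : A) : spectralRadius ℂ a ≤ ‖a‖₊ := by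
  nontriviality A
  exact spectrum.spectralRadius_le_nnnorm a

section SteinSum

variable {c : A}

noncomputable def steinSum (c x : A) : A := ∑' m : ℕ, star (c ^ m) * x * c ^ m

lemma summable_steinSum (hc : spectralRadius ℂ c < 1) (x : A) :
    Summable fun m : ℕ => star (c ^ m) * x * c ^ m := by
  have hc2 := spectrum.summable_norm_pow_sq_of_spectralRadius_lt_one hc
  refine .of_norm_bounded (hc2.mul_right ‖x‖) fun m => ?_
  calc ‖star (c ^ m) * x * c ^ m‖ ≤ ‖star (c ^ m)‖ * ‖x‖ * ‖c ^ m‖ := norm_mul₃_le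
    _ = ‖c ^ m‖ ^ 2 * ‖x‖ := by rw [norm_star]; ring

lemma steinSum_eq_add (hc : spectralRadius ℂ c < 1) (x : A) :
    steinSum c x = x + star c * steinSum c x * c := by
  have hs := summable_steinSum hc x
  conv_lhs => rw [steinSum, hs.tsum_eq_zero_add]
  rw [steinSum, ← hs.tsum_mul_left, ← (hs.mul_left _).tsum_mul_right]
  simp only [pow_zero, star_one, one_mul, mul_one, pow_succ, star_mul, mul_assoc]

lemma steinSum_sub (hc : spectralRadius ℂ c < 1) (x y : A) :
    steinSum c (x - y) = steinSum c x - steinSum c y := by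
  simp only [steinSum, mul_sub, sub_mul]
  exact (summable_steinSum hc x).tsum_sub (summable_steinSum hc y)

section Order

variable [PartialOrder A] [StarOrderedRing A]

lemma steinSum_nonneg {x : A} (hx : 0 ≤ x) : 0 ≤ steinSum c x :=
  tsum_nonneg fun _ => star_left_conjugate_nonneg hx _

lemma steinSum_mono (hc : spectralRadius ℂ c < 1) {x y : A} (h : x ≤ y) :
    steinSum c x ≤ steinSum c y := by
  rw [← sub_nonneg, ← steinSum_sub hc]
  exact steinSum_nonneg (sub_nonneg.mpr h)

lemma le_steinSum (hc : spectralRadius ℂ c < 1) {x : A} (hx : 0 ≤ x) : x ≤ steinSum c x := by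
  rw [steinSum_eq_add hc x]
  exact le_add_of_nonneg_right (star_left_conjugate_nonneg (steinSum_nonneg hx) c)

end Order

lemma star_mul_steinSum_mul (hc : spectralRadius ℂ c < 1) {d : A} (hcd : Commute c d) (x : A) :
    star d * steinSum c x * d = steinSum c (star d * x * d) := by
  have hs := summable_steinSum hc x
  rw [steinSum, ← hs.tsum_mul_left, ← (hs.mul_left _).tsum_mul_right, steinSum]
  refine tsum_congr fun m => ?_
  calc star d * (star (c ^ m) * x * c ^ m) * d = star (c ^ m * d) * x * (c ^ m * d) := by
        simp only [star_mul, mul_assoc]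
    _ = star (d * c ^ m) * x * (d * c ^ m) := by rw [(hcd.pow_left m).eq]
    _ = star (c ^ m) * (star d * x * d) * c ^ m := by simp only [star_mul, mul_assoc]

lemma map_steinSum_eq_zero (π : A →⋆ₐ[ℂ] B)
    (hc : spectralRadius ℂ c < 1) {x : A} (hx : π x = 0) : π (steinSum c x) = 0 := by
  have h := (summable_steinSum hc x).hasSum.map π (map_continuous π)
  simp only [Function.comp_def, map_mul, hx, mul_zero, zero_mul] at h
  exact h.unique hasSum_zero

end SteinSum

lemma map_posPart_eq_zero [PartialOrder B] [StarOrderedRing B] (π : A →⋆ₐ[ℂ] B) {x : A}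
    (hx : IsSelfAdjoint x) (hπx : π x ≤ 0) : π x⁺ = 0 := by
  rw [CFC.posPart_def, NonUnitalStarAlgHomClass.map_cfcₙ π (fun t : ℝ => t⁺) x (ha := hx)
    (hφa := hx.map π), ← CFC.posPart_def]
  exact (CFC.posPart_eq_zero_iff _ (hx.map π)).mpr hπx

variable [PartialOrder A] [StarOrderedRing A]

lemma exists_map_eq_zero_le_add_star_mul_mul_le {ι : Type*} (π : A →⋆ₐ[ℂ] B) {c : ι → A}
    (hc : ∀ i, spectralRadius ℂ (c i) < 1) (hcomm : ∀ i j, Commute (c i) (c j))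
    {m : A} (hm : 0 ≤ m) (hπm : π m = 0) (s : Finset ι) :
    ∃ z, π z = 0 ∧ m ≤ z ∧ ∀ j ∈ s, m + star (c j) * z * c j ≤ z := by
  classical
  induction s using Finset.induction_on with
  | empty => exact ⟨m, hπm, le_rfl, by simp⟩
  | insert i s _ ih =>
    obtain ⟨z, hπz, hmz, hz⟩ := ih
    have hz0 : 0 ≤ z := hm.trans hmz
    refine ⟨steinSum (c i) z, map_steinSum_eq_zero π (hc i) hπz,
      hmz.trans (le_steinSum (hc i) hz0), fun j hj => ?_⟩
    rcases Finset.mem_insert.mp hj with rfl | hjs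
    · calc m + star (c j) * steinSum (c j) z * c j
          ≤ z + star (c j) * steinSum (c j) z * c j := by gcongr
        _ = steinSum (c j) z := (steinSum_eq_add (hc j) z).symm
    · have hzm : star (c j) * z * c j ≤ z - m := le_sub_iff_add_le'.mpr (hz j hjs)
      calc m + star (c j) * steinSum (c i) z * c j
          = m + steinSum (c i) (star (c j) * z * c j) := by
            rw [star_mul_steinSum_mul (hc i) (hcomm i j)]
        _ ≤ steinSum (c i) m + steinSum (c i) (z - m) :=
            add_le_add (le_steinSum (hc i) hm) (steinSum_mono (hc i) hzm)
        _ = steinSum (c i) z := by rw [steinSum_sub (hc i), add_sub_cancel]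

lemma norm_units_conj_le_one_of_star_mul_mul_le {u : Aˣ} (hu : IsSelfAdjoint (u : A)) {c : A}
    (h : star c * (u * u) * c ≤ u * u) : ‖(u : A) * c * ↑u⁻¹‖ ≤ 1 := by
  have hu' : star (↑u⁻¹ : A) * u = 1 := by
    conv_lhs => rw [← hu.star_eq]
    rw [← star_mul, u.mul_inv, star_one]
  rw [← sq_le_one_iff₀ (norm_nonneg _), sq, ← CStarRing.norm_star_mul_self,
    CStarAlgebra.norm_le_one_iff_of_nonneg _ (star_mul_self_nonneg _)]
  calc star ((u : A) * c * ↑u⁻¹) * (u * c * ↑u⁻¹)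
      = star (↑u⁻¹ : A) * (star c * (u * u) * c) * ↑u⁻¹ := by
        simp only [star_mul, hu.star_eq, mul_assoc]
    _ ≤ star (↑u⁻¹ : A) * (u * u) * ↑u⁻¹ := star_left_conjugate_le_conjugate h _
    _ = 1 := by rw [← mul_assoc, hu', one_mul, u.mul_inv]

lemma exists_unit_map_eq_one_norm_conj_le_one [PartialOrder B] [StarOrderedRing B]
    {ι : Type*} [Fintype ι] (π : A →⋆ₐ[ℂ] B) {c : ι → A}
    (hc : ∀ i, spectralRadius ℂ (c i) < 1) (hπc : ∀ i, ‖π (c i)‖ ≤ 1)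
    (hcomm : ∀ i j, Commute (c i) (c j)) :
    ∃ u : Aˣ, π u = 1 ∧ ∀ i, ‖(u : A) * c i * ↑u⁻¹‖ ≤ 1 := by
  set m := ∑ i, (star (c i) * c i - 1)⁺
  have hm : 0 ≤ m := Finset.sum_nonneg fun i _ => CFC.posPart_nonneg _
  have hle : ∀ i, star (c i) * c i - 1 ≤ m := fun i =>
    le_trans CFC.le_posPart <| Finset.single_le_sum
      (fun j _ => CFC.posPart_nonneg (star (c j) * c j - 1)) (Finset.mem_univ i)
  have hπm : π m = 0 := by
    refine (map_sum π _ _).trans <| Finset.sum_eq_zero fun i _ =>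
      map_posPart_eq_zero π (by cfc_tac) ?_
    have : star (π (c i)) * π (c i) ≤ 1 := by
      rw [← CStarAlgebra.norm_le_one_iff_of_nonneg _ (star_mul_self_nonneg _),
        CStarRing.norm_star_mul_self]
      exact mul_le_one₀ (hπc i) (norm_nonneg _) (hπc i)
    simpa only [map_sub, map_mul, map_star, map_one, sub_nonpos]
  obtain ⟨z, hπz, hmz, hz⟩ := exists_map_eq_zero_le_add_star_mul_mul_le π hc hcomm hm hπm .univ
  set g := 1 + z
  have hg : 1 ≤ g := le_add_of_nonneg_right (hm.trans hmz)
  have hcg : ∀ i, star (c i) * g * c i ≤ g := fun i => calc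
    star (c i) * g * c i = star (c i) * c i + star (c i) * z * c i := by
      simp only [g, mul_add, add_mul, mul_one]
    _ ≤ (1 + m) + star (c i) * z * c i := add_le_add (sub_le_iff_le_add'.mp (hle i)) le_rfl
    _ = 1 + (m + star (c i) * z * c i) := add_assoc _ _ _
    _ ≤ g := add_le_add le_rfl (hz i (Finset.mem_univ i))
  have hg0 : 0 ≤ g := zero_le_one.trans hg
  obtain ⟨u, hu⟩ : IsUnit (CFC.sqrt g) := (CFC.isUnit_sqrt_iff g hg0).mpr (isUnit_of_le 1 hg)
  have huu : (u : A) * u = g := hu ▸ CFC.sqrt_mul_sqrt_self g hg0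
  have hπu : π u = 1 := by
    rw [← CFC.sqrt_one, eq_comm]
    refine CFC.sqrt_unique ?_ (map_nonneg π (hu ▸ CFC.sqrt_nonneg g))
    rw [← map_mul, huu, map_add, map_one, hπz, add_zero]
  refine ⟨u, hπu, fun i => norm_units_conj_le_one_of_star_mul_mul_le ?_ (huu ▸ hcg i)⟩
  exact hu ▸ (CFC.sqrt_nonneg g).isSelfAdjoint

lemma exists_unit_map_eq_one_nnnorm_conj_le [PartialOrder B] [StarOrderedRing B] {ι : Type*}
    [Fintype ι] (π : A →⋆ₐ[ℂ] B) {a : ι → A} (hcomm : ∀ i j, Commute (a i) (a j))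
    {ρ : ι → ℝ≥0} (hr : ∀ i, spectralRadius ℂ (a i) < ρ i) (hπa : ∀ i, ‖π (a i)‖₊ ≤ ρ i) :
    ∃ u : Aˣ, π u = 1 ∧ ∀ i, ‖(u : A) * a i * ↑u⁻¹‖₊ ≤ ρ i := by
  have hρ : ∀ i, ρ i ≠ 0 := fun i h => by simpa [h] using hr i
  have hρ' : ∀ i, (ρ i : ℂ) ≠ 0 := fun i => mod_cast hρ i
  set c : ι → A := fun i => (ρ i : ℂ)⁻¹ • a i
  have hnorm : ∀ i, ‖(ρ i : ℂ)‖₊ = ρ i := fun i => by simp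
  have hc : ∀ i, spectralRadius ℂ (c i) < 1 := fun i => by
    rw [spectrum.spectralRadius_smul (inv_ne_zero (hρ' i)), nnnorm_inv, hnorm,
      ENNReal.coe_inv (hρ i), ← ENNReal.div_eq_inv_mul,
      ENNReal.div_lt_iff (by simp [hρ i]) (by simp), one_mul]
    exact hr i
  have hπc : ∀ i, ‖π (c i)‖ ≤ 1 := fun i => by
    rw [map_smul, ← coe_nnnorm, nnnorm_smul, nnnorm_inv, hnorm, NNReal.coe_le_one]
    exact inv_mul_le_one_of_le₀ (hπa i) zero_le
  obtain ⟨u, hπu, hu⟩ := exists_unit_map_eq_one_norm_conj_le_one π hc hπc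
    fun i j => ((hcomm i j).smul_left _).smul_right _
  refine ⟨u, hπu, fun i => ?_⟩
  have : (u : A) * a i * ↑u⁻¹ = (ρ i : ℂ) • ((u : A) * c i * ↑u⁻¹) := by
    rw [mul_smul_comm, smul_mul_assoc, smul_inv_smul₀ (hρ' i)]
  rw [this, nnnorm_smul, hnorm]
  exact mul_le_of_le_one_right zero_le (mod_cast hu i)

end CStarAlgebra

theorem stmt_1_general
    {A : Type*} [NormedRing A] [StarRing A] [CStarRing A] [CompleteSpace A]
    [NormedAlgebra ℂ A] [StarModule ℂ A]
    {B : Type*} [NormedRing B] [StarRing B] [CStarRing B] [CompleteSpace B]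
    [NormedAlgebra ℂ B] [StarModule ℂ B]
    (π : A →⋆ₐ[ℂ] B)
    (n : ℕ) (a : Fin n → A)
    (hcomm : ∀ i j, Commute (a i) (a j))
    (ε : ℝ) (hε : 0 < ε) :
    ∃ e : A, π e = 0 ∧ ∃ u : Aˣ, (u : A) = 1 + e ∧
      ∀ j, max (spectralRadius ℂ (a j)) (‖π (a j)‖₊ : ℝ≥0∞)
              ≤ (‖(u : A) * a j * ((u⁻¹ : Aˣ) : A)‖₊ : ℝ≥0∞) ∧
           (‖(u : A) * a j * ((u⁻¹ : Aˣ) : A)‖₊ : ℝ≥0∞)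
              ≤ max (spectralRadius ℂ (a j)) (‖π (a j)‖₊ : ℝ≥0∞) + ENNReal.ofReal ε := by
  let : CStarAlgebra A := {}
  let : CStarAlgebra B := {}
  let : PartialOrder A := CStarAlgebra.spectralOrder A
  let : StarOrderedRing A := CStarAlgebra.spectralOrderedRing A
  let : PartialOrder B := CStarAlgebra.spectralOrder B
  let : StarOrderedRing B := CStarAlgebra.spectralOrderedRing B
  set M : Fin n → ℝ≥0∞ := fun j => max (spectralRadius ℂ (a j)) ‖π (a j)‖₊
  have hM : ∀ j, M j ≠ ⊤ := fun j =>
    max_ne_top ((CStarAlgebra.spectralRadius_le_nnnorm (a j)).trans_lt ENNReal.coe_lt_top).ne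
      ENNReal.coe_ne_top
  set ρ : Fin n → ℝ≥0 := fun j => (M j).toNNReal + ε.toNNReal
  have hρ : ∀ j, (ρ j : ℝ≥0∞) = M j + ENNReal.ofReal ε := fun j => by
    rw [ENNReal.coe_add, ENNReal.coe_toNNReal (hM j), ENNReal.ofReal]
  have hMρ : ∀ j, M j < ρ j := fun j =>
    (ENNReal.lt_add_right (hM j) (by simpa using hε)).trans_eq (hρ j).symm
  obtain ⟨u, hπu, hu⟩ := CStarAlgebra.exists_unit_map_eq_one_nnnorm_conj_le π hcomm
    (fun j => (le_max_left _ _).trans_lt (hMρ j))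
    (fun j => ENNReal.coe_le_coe.mp ((le_max_right _ _).trans (hMρ j).le))
  have hπu' : π ↑u⁻¹ = 1 := by rw [← map_one π, ← u.mul_inv, map_mul, hπu, one_mul]
  refine ⟨u - 1, by rw [map_sub, hπu, map_one, sub_self], u, by abel, fun j => ⟨max_le ?_ ?_, ?_⟩⟩
  · rw [← spectrum.spectralRadius_units_conj u]
    exact CStarAlgebra.spectralRadius_le_nnnorm _
  · have : π ((u : A) * a j * ↑u⁻¹) = π (a j) := by
      rw [map_mul, map_mul, hπu, hπu', one_mul, mul_one]
    exact ENNReal.coe_le_coe.mpr (this ▸ NonUnitalStarAlgHom.nnnorm_apply_le π _)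
  · exact (ENNReal.coe_le_coe.mpr (hu j)).trans_eq (hρ j)

theorem stmt_1
    {A : Type*} [NormedRing A] [StarRing A] [CStarRing A] [CompleteSpace A]
    [NormedAlgebra ℂ A] [StarModule ℂ A]
    {B : Type*} [NormedRing B] [StarRing B] [CStarRing B] [CompleteSpace B]
    [NormedAlgebra ℂ B] [StarModule ℂ B]
    (π : A →⋆ₐ[ℂ] B) (hπ : Function.Surjective π)
    (n : ℕ) (a : Fin n → A)
    (hcomm : ∀ i j, Commute (a i) (a j))
    (ε : ℝ) (hε : 0 < ε) :
    ∃ e : A, π e = 0 ∧ ∃ u : Aˣ, (u : A) = 1 + e ∧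
      ∀ j, max (spectralRadius ℂ (a j)) (‖π (a j)‖₊ : ℝ≥0∞)
              ≤ (‖(u : A) * a j * ((u⁻¹ : Aˣ) : A)‖₊ : ℝ≥0∞) ∧
           (‖(u : A) * a j * ((u⁻¹ : Aˣ) : A)‖₊ : ℝ≥0∞)
              ≤ max (spectralRadius ℂ (a j)) (‖π (a j)‖₊ : ℝ≥0∞) + ENNReal.ofReal ε :=
  stmt_1_general π n a hcomm ε hε
end

section
/- Let A be a unital C*-algebra, I a closed two-sided ideal of A, and let a_1, …, a_n be pairwise commuting elements of A such that r(a_j) < ‖π(a_j)‖ for all j. Then there exists e ∈ I such that 1 + e is invertible in A and ‖(1+e) a_j (1+e)⁻¹‖ = ‖π(a_j)‖ (= max{r(a_j), ‖π(a_j)‖}) for all j = 1, …, n. -/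
/-!
After rescaling, `‖π b_j‖ = 1` and `r(b_j) < 1`, so `∑ ‖b_jᵏ‖ < ∞` by Gelfand's formula.
The element `m = ∑ⱼ (b_j⋆ b_j - 1)⁺` lies in `ker π` and `b_j⋆ b_j ≤ 1 + m`.
The series `Ψ_b x = ∑ₖ (bᵏ)⋆ x bᵏ` solves the Stein equation `b⋆ (Ψ_b x) b = Ψ_b x - x`, preserves
`ker π` and commutes with conjugation by anything commuting with `b`; applying `Ψ_{b_1}, …, Ψ_{b_n}`
to `m` in turn gives `T ≥ m` in `ker π` with `b_j⋆ T b_j ≤ T - m` for every `j`. Hence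
`b_j⋆ (1 + T) b_j ≤ 1 + T`, so `u = (1 + T)^{1/2} ∈ 1 + ker π` satisfies
`(u b_j u⁻¹)⋆ (u b_j u⁻¹) ≤ 1`, i.e. `‖u b_j u⁻¹‖ ≤ 1`; the reverse inequality holds because
`π u = 1`.
-/

open scoped ENNReal NNReal CStarAlgebra

open Filter in
theorem summable_norm_pow_div_pow_of_spectralRadius_lt {A : Type*} [NormedRing A]
    [NormedAlgebra ℂ A] [CompleteSpace A] {a : A} {r : ℝ≥0}
    (h : spectralRadius ℂ a < r) : Summable fun k : ℕ => ‖a ^ k‖ / (r : ℝ) ^ k := by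
  obtain ⟨ρ, haρ, hρr⟩ := ENNReal.lt_iff_exists_nnreal_btwn.mp h
  have hρr : ρ < r := by exact_mod_cast hρr
  have hr : (0 : ℝ) < r := by exact_mod_cast pos_of_gt hρr
  have hpow : ∀ᶠ k : ℕ in atTop, ‖a ^ k‖ ≤ (ρ : ℝ) ^ k := by
    filter_upwards [(spectrum.pow_norm_pow_one_div_tendsto_nhds_spectralRadius a)
      |>.eventually_lt_const haρ, eventually_gt_atTop 0] with k hk hk0
    rw [ENNReal.ofReal_lt_coe_iff (by positivity), one_div,
      Real.rpow_inv_lt_iff_of_pos (norm_nonneg _) ρ.coe_nonneg (by positivity),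
      Real.rpow_natCast] at hk
    exact hk.le
  refine Summable.of_norm_bounded_eventually_nat
    (summable_geometric_of_lt_one (div_nonneg ρ.coe_nonneg hr.le) ((div_lt_one hr).mpr hρr)) ?_
  filter_upwards [hpow] with k hk
  rw [Real.norm_of_nonneg (by positivity), div_pow]
  gcongr

section ConjSeries

variable {A : Type*} [NormedRing A] [StarRing A] [NormedStarGroup A] [CompleteSpace A]

noncomputable def conjSeries (b x : A) : A := ∑' k : ℕ, star (b ^ k) * x * b ^ k

variable {b : A}

theorem summable_conjSeries (hb : Summable fun k : ℕ => ‖b ^ k‖) (x : A) :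
    Summable fun k : ℕ => star (b ^ k) * x * b ^ k := by
  refine Summable.of_norm_bounded_eventually_nat (hb.mul_right ‖x‖) ?_
  filter_upwards [hb.tendsto_atTop_zero.eventually_le_const one_pos] with k hk
  calc ‖star (b ^ k) * x * b ^ k‖ ≤ ‖b ^ k‖ * ‖x‖ * ‖b ^ k‖ := by
        simpa only [norm_star] using norm_mul₃_le (a := star (b ^ k))
    _ ≤ ‖b ^ k‖ * ‖x‖ * 1 := by gcongr
    _ = ‖b ^ k‖ * ‖x‖ := mul_one _

variable (hb : Summable fun k : ℕ => ‖b ^ k‖)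
include hb

theorem conjSeries_sub (x y : A) : conjSeries b (x - y) = conjSeries b x - conjSeries b y := by
  simp only [conjSeries, ← (summable_conjSeries hb x).tsum_sub (summable_conjSeries hb y),
    mul_sub, sub_mul]

theorem star_mul_conjSeries_mul (x : A) : star b * conjSeries b x * b = conjSeries b x - x := by
  have hs := summable_conjSeries hb x
  calc star b * conjSeries b x * b = ∑' k : ℕ, star (b ^ (k + 1)) * x * b ^ (k + 1) := by
        rw [conjSeries, ← hs.tsum_mul_left, ← (hs.mul_left _).tsum_mul_right]
        simp only [pow_succ, star_mul, mul_assoc]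
    _ = conjSeries b x - x := by
        rw [conjSeries, hs.tsum_eq_zero_add]
        simp

theorem star_mul_conjSeries_mul_of_commute {c : A} (hbc : Commute b c) (x : A) :
    star c * conjSeries b x * c = conjSeries b (star c * x * c) := by
  rw [conjSeries, ← (summable_conjSeries hb x).tsum_mul_left, ← Summable.tsum_mul_right]
  · refine tsum_congr fun k => ?_
    have hck : star c * star (b ^ k) = star (b ^ k) * star c := by
      rw [← star_mul, ← star_mul, (hbc.pow_left k).eq]
    simp only [← mul_assoc, hck]
    rw [mul_assoc _ (b ^ k), (hbc.pow_left k).eq, ← mul_assoc]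
  · exact (summable_conjSeries hb x).mul_left _

theorem map_conjSeries_eq_zero {B F : Type*} [Ring B] [TopologicalSpace B] [T2Space B]
    [FunLike F A B] [RingHomClass F A B] (φ : F) (hφ : Continuous φ) {x : A} (hx : φ x = 0) :
    φ (conjSeries b x) = 0 := by
  rw [conjSeries, (summable_conjSeries hb x).map_tsum φ hφ]
  simp [hx]

end ConjSeries

section Ordered

variable {A : Type*} [CStarAlgebra A] [PartialOrder A] [StarOrderedRing A]

section

variable {b : A}

theorem conjSeries_nonneg {x : A} (hx : 0 ≤ x) : 0 ≤ conjSeries b x :=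
  tsum_nonneg fun _ => star_left_conjugate_nonneg hx _

variable (hb : Summable fun k : ℕ => ‖b ^ k‖)
include hb

theorem le_conjSeries {x : A} (hx : 0 ≤ x) : x ≤ conjSeries b x := by
  rw [← sub_nonneg, ← star_mul_conjSeries_mul hb]
  exact star_left_conjugate_nonneg (conjSeries_nonneg hx) b

theorem conjSeries_mono {x y : A} (hxy : x ≤ y) : conjSeries b x ≤ conjSeries b y := by
  rw [← sub_nonneg, ← conjSeries_sub hb]
  exact conjSeries_nonneg (sub_nonneg.mpr hxy)

end

theorem exists_star_mul_mul_le_sub {B F ι : Type*} [Ring B] [TopologicalSpace B] [T2Space B]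
    [FunLike F A B] [RingHomClass F A B] (φ : F) (hφ : Continuous φ) (s : Finset ι) (b : ι → A)
    (hcomm : ∀ i j, Commute (b i) (b j)) (hb : ∀ i, Summable fun k : ℕ => ‖b i ^ k‖)
    {m : A} (hm : 0 ≤ m) (hφm : φ m = 0) :
    ∃ T, m ≤ T ∧ φ T = 0 ∧ ∀ j ∈ s, star (b j) * T * b j ≤ T - m := by
  classical
  induction s using Finset.induction_on with
  | empty => exact ⟨m, le_rfl, hφm, by simp⟩
  | insert i s _ ih =>
    obtain ⟨T, hmT, hφT, hT⟩ := ih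
    refine ⟨conjSeries (b i) T, hmT.trans (le_conjSeries (hb i) (hm.trans hmT)),
      map_conjSeries_eq_zero (hb i) φ hφ hφT, ?_⟩
    rintro j hj
    rcases Finset.mem_insert.mp hj with rfl | hj
    · rw [star_mul_conjSeries_mul (hb j)]
      exact sub_le_sub_left hmT _
    · calc star (b j) * conjSeries (b i) T * b j = conjSeries (b i) (star (b j) * T * b j) :=
            star_mul_conjSeries_mul_of_commute (hb i) (hcomm i j) T
        _ ≤ conjSeries (b i) (T - m) := conjSeries_mono (hb i) (hT j hj)
        _ = conjSeries (b i) T - conjSeries (b i) m := conjSeries_sub (hb i) T m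
        _ ≤ conjSeries (b i) T - m := sub_le_sub_left (le_conjSeries (hb i) hm) _

theorem star_mul_self_le_one_add_posPart (b : A) : star b * b ≤ 1 + (star b * b - 1)⁺ := by
  rw [← sub_le_iff_le_add']
  exact CFC.le_posPart

theorem norm_mul_mul_inv_le_one {s : Aˣ} (hs : IsSelfAdjoint (s : A)) {b : A}
    (h : star b * (s * s) * b ≤ s * s) : ‖(s : A) * b * ↑s⁻¹‖ ≤ 1 := by
  have hs_inv : IsSelfAdjoint (↑s⁻¹ : A) := by
    rw [IsSelfAdjoint, ← Units.coe_star_inv, show star s = s from Units.ext hs]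
  have hconj : star ((s : A) * b * ↑s⁻¹) * ((s : A) * b * ↑s⁻¹) ≤ 1 := by
    calc star ((s : A) * b * ↑s⁻¹) * ((s : A) * b * ↑s⁻¹)
        = ↑s⁻¹ * (star b * (s * s) * b) * ↑s⁻¹ := by
          simp only [star_mul, hs.star_eq, hs_inv.star_eq, mul_assoc]
      _ ≤ ↑s⁻¹ * (s * s) * ↑s⁻¹ := hs_inv.conjugate_le_conjugate h
      _ = 1 := by simp
  rw [← CStarAlgebra.norm_le_one_iff_of_nonneg _ (star_mul_self_nonneg _),
    CStarRing.norm_star_mul_self] at hconj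
  nlinarith [norm_nonneg ((s : A) * b * ↑s⁻¹)]

end Ordered

theorem map_posPart_star_mul_self_sub_one {A B : Type*} [CStarAlgebra A] [CStarAlgebra B]
    [PartialOrder B] [StarOrderedRing B] (π : A →⋆ₐ[ℂ] B) {b : A} (hb : ‖π b‖ ≤ 1) :
    π ((star b * b - 1)⁺) = 0 := by
  have hmap : π ((star b * b - 1)⁺) = (star (π b) * π b - 1)⁺ := by
    calc π ((star b * b - 1)⁺) = π (cfc (·⁺ : ℝ → ℝ) (star b * b - 1)) := by
          rw [CFC.posPart_def, cfcₙ_eq_cfc]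
      _ = cfc (·⁺ : ℝ → ℝ) (π (star b * b - 1)) := π.map_cfc _ _
            (hφa := ((IsSelfAdjoint.star_mul_self b).sub (IsSelfAdjoint.one A)).map π)
      _ = (star (π b) * π b - 1)⁺ := by
          rw [map_sub, map_one, map_mul, map_star, CFC.posPart_def, cfcₙ_eq_cfc]
  rw [hmap, CFC.posPart_eq_zero_iff _, sub_nonpos,
    ← CStarAlgebra.norm_le_one_iff_of_nonneg _ (star_mul_self_nonneg _),
    CStarRing.norm_star_mul_self]
  exact mul_le_one₀ hb (norm_nonneg _) hb

theorem norm_map_le_norm_mul_mul_inv {A B : Type*} [CStarAlgebra A] [CStarAlgebra B]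
    (π : A →⋆ₐ[ℂ] B) {u : Aˣ} (hu : π u = 1) (x : A) : ‖π x‖ ≤ ‖(u : A) * x * ↑u⁻¹‖ := by
  have hu_inv : π ↑u⁻¹ = 1 := by
    simpa only [map_mul, map_one, hu, one_mul] using congrArg π u.mul_inv
  calc ‖π x‖ = ‖π ((u : A) * x * ↑u⁻¹)‖ := by rw [map_mul, map_mul, hu, hu_inv, one_mul, mul_one]
    _ ≤ ‖(u : A) * x * ↑u⁻¹‖ := NonUnitalStarAlgHom.norm_apply_le π _

theorem star_mul_one_add_mul_le {A : Type*} [Ring A] [StarRing A] [PartialOrder A]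
    [IsOrderedAddMonoid A] {b m T : A} (hbb : star b * b ≤ 1 + m) (hT : star b * T * b ≤ T - m) :
    star b * (1 + T) * b ≤ 1 + T :=
  calc star b * (1 + T) * b = star b * b + star b * T * b := by noncomm_ring
    _ ≤ 1 + m + (T - m) := add_le_add hbb hT
    _ = 1 + T := by abel

theorem exists_map_eq_one_norm_mul_mul_inv_le_one {A B ι : Type*} [CStarAlgebra A]
    [PartialOrder A] [StarOrderedRing A] [CStarAlgebra B] [PartialOrder B] [StarOrderedRing B]
    [Fintype ι] (π : A →⋆ₐ[ℂ] B) (b : ι → A) (hcomm : ∀ i j, Commute (b i) (b j))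
    (hb : ∀ j, Summable fun k : ℕ => ‖b j ^ k‖) (hπb : ∀ j, ‖π (b j)‖ ≤ 1) :
    ∃ u : Aˣ, π u = 1 ∧ ∀ j, ‖(u : A) * b j * ↑u⁻¹‖ ≤ 1 := by
  set m := ∑ j, (star (b j) * b j - 1)⁺
  have hm : 0 ≤ m := Finset.sum_nonneg fun j _ => CFC.posPart_nonneg _
  have hπm : π m = 0 := by
    simp only [m, map_sum, map_posPart_star_mul_self_sub_one π (hπb _), Finset.sum_const_zero]
  obtain ⟨T, hmT, hπT, hT⟩ :=
    exists_star_mul_mul_le_sub π (map_continuous π) Finset.univ b hcomm hb hm hπm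
  have ht : IsStrictlyPositive (1 + T) := isStrictlyPositive_one.add_nonneg (hm.trans hmT)
  obtain ⟨u, hu⟩ := ht.isUnit_cfcSqrt
  have huu : (u : A) * u = 1 + T := by rw [hu]; exact CFC.sqrt_mul_sqrt_self _ ht.nonneg
  have hπu : π u = 1 := by
    rw [hu, CFC.sqrt_eq_cfc, π.map_cfc _ _ (hφa := by simp [hπT]), map_add, map_one, hπT,
      add_zero, ← CFC.sqrt_eq_cfc, CFC.sqrt_one]
  refine ⟨u, hπu, fun j => norm_mul_mul_inv_le_one (hu ▸ (CFC.sqrt_nonneg _).isSelfAdjoint) ?_⟩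
  rw [huu]
  refine star_mul_one_add_mul_le ((star_mul_self_le_one_add_posPart (b j)).trans ?_)
    (hT j (Finset.mem_univ j))
  exact add_le_add le_rfl (Finset.single_le_sum (f := fun i => (star (b i) * b i - 1)⁺)
    (fun i _ => CFC.posPart_nonneg _) (Finset.mem_univ j))

theorem exists_map_eq_one_norm_mul_mul_inv_eq {A B ι : Type*} [CStarAlgebra A]
    [PartialOrder A] [StarOrderedRing A] [CStarAlgebra B] [PartialOrder B] [StarOrderedRing B]
    [Fintype ι] (π : A →⋆ₐ[ℂ] B) (a : ι → A) (hcomm : ∀ i j, Commute (a i) (a j))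
    (hr : ∀ j, spectralRadius ℂ (a j) < ‖π (a j)‖₊) :
    ∃ u : Aˣ, π u = 1 ∧ ∀ j, ‖(u : A) * a j * ↑u⁻¹‖ = ‖π (a j)‖ := by
  have hpos : ∀ j, 0 < ‖π (a j)‖ := fun j => by
    exact_mod_cast ENNReal.coe_pos.mp (pos_of_gt (hr j))
  set b : ι → A := fun j => (‖π (a j)‖ : ℂ)⁻¹ • a j
  have hab : ∀ j, a j = (‖π (a j)‖ : ℂ) • b j := fun j => by
    simp [b, smul_smul, mul_inv_cancel₀ (Complex.ofReal_ne_zero.mpr (hpos j).ne')]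
  have hsum : ∀ j, Summable fun k : ℕ => ‖b j ^ k‖ := fun j =>
    (summable_norm_pow_div_pow_of_spectralRadius_lt (hr j)).congr fun k => by
      simp [b, smul_pow, norm_smul, div_eq_inv_mul]
  have hπb : ∀ j, ‖π (b j)‖ ≤ 1 := fun j => by simp [b, norm_smul, (hpos j).ne']
  obtain ⟨u, hu, hub⟩ := exists_map_eq_one_norm_mul_mul_inv_le_one π b
    (fun i j => ((hcomm i j).smul_left _).smul_right _) hsum hπb
  refine ⟨u, hu, fun j => le_antisymm ?_ (norm_map_le_norm_mul_mul_inv π hu (a j))⟩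
  calc ‖(u : A) * a j * ↑u⁻¹‖ = ‖π (a j)‖ * ‖(u : A) * b j * ↑u⁻¹‖ := by
        conv_lhs => rw [hab j]
        rw [mul_smul_comm, smul_mul_assoc, norm_smul, Complex.norm_real, norm_norm]
    _ ≤ ‖π (a j)‖ := mul_le_of_le_one_right (norm_nonneg _) (hub j)

theorem stmt_2_general
    {A : Type*} [NormedRing A] [StarRing A] [CStarRing A] [CompleteSpace A]
    [NormedAlgebra ℂ A] [StarModule ℂ A]
    {B : Type*} [NormedRing B] [StarRing B] [CStarRing B] [CompleteSpace B]
    [NormedAlgebra ℂ B] [StarModule ℂ B]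
    (π : A →⋆ₐ[ℂ] B)
    (n : ℕ) (a : Fin n → A)
    (hcomm : ∀ i j, Commute (a i) (a j))
    (hr : ∀ j, spectralRadius ℂ (a j) < (‖π (a j)‖₊ : ℝ≥0∞)) :
    ∃ e : A, π e = 0 ∧ ∃ u : Aˣ, (u : A) = 1 + e ∧
      ∀ j, ‖(u : A) * a j * ((u⁻¹ : Aˣ) : A)‖ = ‖π (a j)‖ := by
  let _ : CStarAlgebra A := {}
  let _ : CStarAlgebra B := {}
  let _ : PartialOrder A := CStarAlgebra.spectralOrder A
  let _ : StarOrderedRing A := CStarAlgebra.spectralOrderedRing A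
  let _ : PartialOrder B := CStarAlgebra.spectralOrder B
  let _ : StarOrderedRing B := CStarAlgebra.spectralOrderedRing B
  obtain ⟨u, hu, hua⟩ := exists_map_eq_one_norm_mul_mul_inv_eq π a hcomm hr
  exact ⟨u - 1, by rw [map_sub, hu, map_one, sub_self], u, by abel, hua⟩

theorem stmt_2
    {A : Type*} [NormedRing A] [StarRing A] [CStarRing A] [CompleteSpace A]
    [NormedAlgebra ℂ A] [StarModule ℂ A]
    {B : Type*} [NormedRing B] [StarRing B] [CStarRing B] [CompleteSpace B]
    [NormedAlgebra ℂ B] [StarModule ℂ B]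
    (π : A →⋆ₐ[ℂ] B) (hπ : Function.Surjective π)
    (n : ℕ) (a : Fin n → A)
    (hcomm : ∀ i j, Commute (a i) (a j))
    (hr : ∀ j, spectralRadius ℂ (a j) < (‖π (a j)‖₊ : ℝ≥0∞)) :
    ∃ e : A, π e = 0 ∧ ∃ u : Aˣ, (u : A) = 1 + e ∧
      ∀ j, ‖(u : A) * a j * ((u⁻¹ : Aˣ) : A)‖ = ‖π (a j)‖ :=
  stmt_2_general π n a hcomm hr
end

section
/- Let A be a unital C*-algebra and a, b ∈ A with ab = ba, r(a) < 1, and ‖b‖ ≤ 1. Then there exists an invertible element y ∈ A such that ‖y a y⁻¹‖ < 1 and ‖y b y⁻¹‖ ≤ 1. -/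
/-!
The series `T = ∑ₙ (aⁿ)⋆ aⁿ ≥ 1` converges because, by Gelfand's formula, `‖aⁿ‖` decays
geometrically when `r(a) < 1`. It satisfies the Stein equation `a⋆ T a = T - 1`, and, since `b`
commutes with `a` and `b⋆ b ≤ 1`, also `b⋆ T b ≤ T`. For a self-adjoint invertible square root
`y` of `T` one has `‖y x y⁻¹‖² = ‖y⁻¹ (x⋆ T x) y⁻¹‖`, so the second relation gives
`‖y b y⁻¹‖ ≤ 1`, and the first, together with `T - 1 ≤ (1 - ‖T‖⁻¹) T`, gives
`‖y a y⁻¹‖² ≤ 1 - ‖T‖⁻¹ < 1`.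
-/

open scoped ENNReal NNReal
open Filter

section Gelfand

variable {A : Type*} [NormedRing A] [NormedAlgebra ℂ A] [CompleteSpace A]

lemma eventually_norm_pow_le_of_spectralRadius_lt_s17 {a : A} {r : ℝ≥0}
    (h : spectralRadius ℂ a < r) : ∀ᶠ n : ℕ in atTop, ‖a ^ n‖ ≤ (r : ℝ) ^ n := by
  filter_upwards
    [(spectrum.pow_nnnorm_pow_one_div_tendsto_nhds_spectralRadius a).eventually_lt_const h,
    eventually_ge_atTop 1] with n hn hn1
  rw [one_div, ENNReal.rpow_inv_lt_iff (by positivity), ENNReal.rpow_natCast] at hn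
  exact_mod_cast hn.le

lemma summable_star_pow_mul_pow [StarRing A] [NormedStarGroup A] {a : A}
    (h : spectralRadius ℂ a < 1) : Summable fun n : ℕ => star (a ^ n) * a ^ n := by
  obtain ⟨r, har, hr1⟩ := ENNReal.lt_iff_exists_nnreal_btwn.mp h
  have hr1 : (r : ℝ) < 1 := by exact_mod_cast hr1
  refine .of_norm_bounded_eventually_nat
    (summable_geometric_of_lt_one (by positivity) (pow_lt_one₀ r.2 hr1 two_ne_zero)) ?_
  filter_upwards [eventually_norm_pow_le_of_spectralRadius_lt_s17 har] with n hn
  calc ‖star (a ^ n) * a ^ n‖ ≤ ‖a ^ n‖ ^ 2 := by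
        simpa only [norm_star, sq] using norm_mul_le (star (a ^ n)) (a ^ n)
    _ ≤ ((r : ℝ) ^ n) ^ 2 := by gcongr
    _ = ((r : ℝ) ^ 2) ^ n := by ring

end Gelfand

section LyapunovSum

variable {A : Type*} [Ring A] [StarRing A] [TopologicalSpace A] [IsTopologicalRing A] [T2Space A]

noncomputable def lyapunovSum (a : A) : A := ∑' n : ℕ, star (a ^ n) * a ^ n

lemma star_mul_lyapunovSum_mul_self {a : A} (ha : Summable fun n : ℕ => star (a ^ n) * a ^ n) :
    star a * lyapunovSum a * a = lyapunovSum a - 1 := by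
  rw [lyapunovSum, ← ha.tsum_mul_left, ← (ha.mul_left (star a)).tsum_mul_right,
    ha.tsum_eq_zero_add]
  simp [pow_succ, star_mul, mul_assoc]

variable [PartialOrder A] [StarOrderedRing A] [OrderClosedTopology A]

lemma one_le_lyapunovSum {a : A} (ha : Summable fun n : ℕ => star (a ^ n) * a ^ n) :
    1 ≤ lyapunovSum a := by
  rw [lyapunovSum, ha.tsum_eq_zero_add, pow_zero, star_one, mul_one, le_add_iff_nonneg_right]
  exact tsum_nonneg fun n => star_mul_self_nonneg (a ^ (n + 1))

lemma star_mul_lyapunovSum_mul_le {a b : A} (ha : Summable fun n : ℕ => star (a ^ n) * a ^ n)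
    (hab : Commute a b) (hb : star b * b ≤ 1) :
    star b * lyapunovSum a * b ≤ lyapunovSum a := by
  rw [lyapunovSum, ← ha.tsum_mul_left, ← (ha.mul_left (star b)).tsum_mul_right]
  refine Summable.tsum_le_tsum (fun n => ?_) ((ha.mul_left _).mul_right _) ha
  calc star b * (star (a ^ n) * a ^ n) * b = star (a ^ n * b) * (a ^ n * b) := by
        simp only [star_mul, mul_assoc]
    _ = star (b * a ^ n) * (b * a ^ n) := by rw [(hab.pow_left n).eq]
    _ = star (a ^ n) * (star b * b) * a ^ n := by simp only [star_mul, mul_assoc]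
    _ ≤ star (a ^ n) * 1 * a ^ n := star_left_conjugate_le_conjugate hb _
    _ = star (a ^ n) * a ^ n := by rw [mul_one]

end LyapunovSum

section Similarity

variable {A : Type*} [CStarAlgebra A] [PartialOrder A] [StarOrderedRing A]

lemma IsSelfAdjoint.inv_norm_smul_le_one {t : A} (ht : IsSelfAdjoint t) : ‖t‖⁻¹ • t ≤ 1 := by
  rcases eq_or_ne ‖t‖ 0 with h | h
  · simp [h]
  calc ‖t‖⁻¹ • t ≤ ‖t‖⁻¹ • algebraMap ℝ A ‖t‖ :=
        smul_le_smul_of_nonneg_left ht.le_algebraMap_norm_self (by positivity)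
    _ = 1 := by rw [Algebra.algebraMap_eq_smul_one, smul_smul, inv_mul_cancel₀ h, one_smul]

lemma norm_units_conj_sq_le {s : Aˣ} (hs : IsSelfAdjoint (s : A)) {x : A} {c : ℝ} (hc : 0 ≤ c)
    (h : star x * (s * s) * x ≤ c • (s * s : A)) :
    ‖(s : A) * x * ↑s⁻¹‖ ^ 2 ≤ c := by
  have hs' : IsSelfAdjoint (↑s⁻¹ : A) := by
    rw [IsSelfAdjoint, ← Units.coe_star_inv, show star s = s from Units.ext hs.star_eq]
  rw [sq, ← CStarRing.norm_star_mul_self,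
    CStarAlgebra.norm_le_iff_le_algebraMap _ hc (star_mul_self_nonneg _)]
  calc star ((s : A) * x * ↑s⁻¹) * ((s : A) * x * ↑s⁻¹)
      = ↑s⁻¹ * (star x * (s * s) * x) * ↑s⁻¹ := by
        simp only [star_mul, hs.star_eq, hs'.star_eq, mul_assoc]
    _ ≤ ↑s⁻¹ * (c • (s * s : A)) * ↑s⁻¹ := hs'.conjugate_le_conjugate h
    _ = algebraMap ℝ A c := by
        rw [Algebra.algebraMap_eq_smul_one, mul_smul_comm, smul_mul_assoc]
        simp [← mul_assoc]

lemma norm_units_conj_le_one {s : Aˣ} (hs : IsSelfAdjoint (s : A)) {x : A}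
    (h : star x * (s * s) * x ≤ s * s) : ‖(s : A) * x * ↑s⁻¹‖ ≤ 1 := by
  refine (sq_le_one_iff₀ (norm_nonneg _)).mp (norm_units_conj_sq_le hs zero_le_one ?_)
  rwa [one_smul]

lemma norm_units_conj_lt_one {s : Aˣ} (hs : IsSelfAdjoint (s : A)) {x : A}
    (h : star x * (s * s) * x ≤ s * s - 1) : ‖(s : A) * x * ↑s⁻¹‖ < 1 := by
  nontriviality A
  set t : A := s * s
  have ht : 1 ≤ ‖t‖ := by
    have : (1 : A) ≤ t :=
      sub_nonneg.mp ((star_left_conjugate_nonneg hs.mul_self_nonneg x).trans h)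
    simpa using CStarAlgebra.norm_le_norm_of_nonneg_of_le zero_le_one this
  have hc : (0 : ℝ) ≤ 1 - ‖t‖⁻¹ := sub_nonneg.mpr (inv_le_one_of_one_le₀ ht)
  refine (sq_lt_one_iff₀ (norm_nonneg _)).mp ((norm_units_conj_sq_le hs hc ?_).trans_lt ?_)
  · calc star x * t * x ≤ t - 1 := h
      _ ≤ t - ‖t‖⁻¹ • t :=
        sub_le_sub_left (IsSelfAdjoint.of_nonneg hs.mul_self_nonneg).inv_norm_smul_le_one t
      _ = (1 - ‖t‖⁻¹) • t := by rw [sub_smul, one_smul]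
  · linarith [inv_pos.mpr (one_pos.trans_le ht)]

end Similarity

theorem stmt_17
    {A : Type*} [NormedRing A] [StarRing A] [CStarRing A] [CompleteSpace A]
    [NormedAlgebra ℂ A] [StarModule ℂ A]
    (a b : A) (hab : a * b = b * a)
    (hr : spectralRadius ℂ a < 1) (hb : ‖b‖ ≤ 1) :
    ∃ y : Aˣ, ‖(y : A) * a * ((y⁻¹ : Aˣ) : A)‖ < 1
      ∧ ‖(y : A) * b * ((y⁻¹ : Aˣ) : A)‖ ≤ 1 := by
  let : CStarAlgebra A := {}
  -- `A` carries no order of its own: use the one whose positive cone is `{star x * x}`.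
  let := CStarAlgebra.spectralOrder A
  have := CStarAlgebra.spectralOrderedRing A
  have hsum := summable_star_pow_mul_pow hr
  obtain ⟨y, hy, hysa, hyT⟩ :=
    CStarAlgebra.isStrictlyPositive_iff_exists_isUnit_and_isSelfAdjoint_and_eq_mul_self.mp
      (isStrictlyPositive_one.of_le (one_le_lyapunovSum hsum))
  lift y to Aˣ using hy
  have hb' : star b * b ≤ 1 := by
    rw [← CStarAlgebra.norm_le_one_iff_of_nonneg _ (star_mul_self_nonneg b),
      CStarRing.norm_star_mul_self]
    exact mul_le_one₀ hb (norm_nonneg b) hb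
  refine ⟨y, norm_units_conj_lt_one hysa ?_, norm_units_conj_le_one hysa ?_⟩
  · rw [← hyT, star_mul_lyapunovSum_mul_self hsum]
  · rw [← hyT]
    exact star_mul_lyapunovSum_mul_le hsum hab hb'
end
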